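/- arXiv:1809.06804 — 4 statements merged into one kernel-verified Lean document; each statement's English description precedes it below -/
import Mathlib

section
/- The number of closed paths (i_1,...,i_k) with indices in Z/kZ, values in positive integers, satisfying |i_j - i_{j+1}| = 1 for all j and passing through the value 1, equals the central binomial coefficient C(k, k/2) when k is even (and 0 when k is odd). -/
/-!
A closed path is determined by its increments `i (j + 1) - i j = ±1` together with its minimum,
and the increments are determined by the set `S` of up-steps. Going once around the cycle the
increments sum to `2 |S| - k`, so closing up forces `2 |S| = k`; conversely, for any such `S` the
partial sums of the `±1` sequence close up, and shifting them to have minimum `1` gives a path.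
Hence closed paths correspond to the `k / 2`-subsets of `ZMod k`.
-/

open Finset

namespace ZMod

variable {k : ℕ} [NeZero k]

theorem apply_eq_apply_zero_of_add_one {α : Type*} {g : ZMod k → α} (h : ∀ j, g (j + 1) = g j)
    (j : ZMod k) : g j = g 0 := by
  have hper : Function.Periodic g 1 := h
  simpa using hper.nat_mul_eq j.val

theorem sum_range_natCast {M : Type*} [AddCommMonoid M] (f : ZMod k → M) :
    ∑ m ∈ range k, f m = ∑ j, f j :=
  sum_nbij' (↑) ZMod.val (fun _ _ => mem_univ _) (fun j _ => mem_range.2 j.val_lt)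
    (fun _ hm => ZMod.val_cast_of_lt (mem_range.1 hm)) (fun j _ => ZMod.natCast_zmod_val j)
    (fun _ _ => rfl)

theorem exists_add_one_eq_add_of_sum_eq_zero {G : Type*} [AddCommGroup G] {f : ZMod k → G}
    (hf : ∑ j, f j = 0) : ∃ g : ZMod k → G, ∀ j, g (j + 1) = g j + f j := by
  refine ⟨fun j => ∑ m ∈ range j.val, f m, fun j => ?_⟩
  have hval : (j + 1).val = (j.val + 1) % k := by
    rw [ZMod.val_add, ZMod.val_one_eq_one_mod, Nat.add_mod_mod]
  by_cases hlt : j.val + 1 < k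
  · simp only [hval, Nat.mod_eq_of_lt hlt, sum_range_succ, ZMod.natCast_zmod_val]
  · have heq : j.val + 1 = k := by have := j.val_lt; omega
    -- wrapping around from `j = -1` to `0`: the full sum over the cycle vanishes
    have hsum := sum_range_succ (fun m : ℕ => f m) j.val
    rw [heq, sum_range_natCast, hf, ZMod.natCast_zmod_val] at hsum
    dsimp only
    rw [hval, heq, Nat.mod_self, range_zero, sum_empty, hsum]

end ZMod

theorem card_subtype_two_mul_card_eq (α : Type*) [Fintype α] :
    Nat.card {S : Finset α // 2 * #S = Fintype.card α} =
      if Even (Fintype.card α) then (Fintype.card α).choose (Fintype.card α / 2) else 0 := by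
  split_ifs with h
  · obtain ⟨m, hm⟩ := h
    rw [Nat.card_congr (Equiv.subtypeEquivRight fun S =>
        show 2 * #S = _ ↔ #S = Fintype.card α / 2 by omega),
      Nat.card_eq_fintype_card, Fintype.card_finset_len]
  · exact Nat.card_eq_zero.2 (Or.inl ⟨fun ⟨S, hS⟩ => h ⟨#S, by omega⟩⟩)

def ClosedPath (k : ℕ) [NeZero k] : Type :=
  {i : ZMod k → ℕ // (∀ j, 1 ≤ i j) ∧ (∀ j, ((i j : ℤ) - i (j + 1)).natAbs = 1) ∧ (∃ j, i j = 1)}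

namespace ClosedPath

section Steps

variable {k : ℕ}

def steps (S : Finset (ZMod k)) (j : ZMod k) : ℤ := if j ∈ S then 1 else -1

theorem steps_injective : Function.Injective (steps (k := k)) := by
  intro S T h
  ext j
  have := congrFun h j
  simp only [steps] at this
  split_ifs at this <;> simp_all

end Steps

variable {k : ℕ} [NeZero k]

theorem sum_steps (S : Finset (ZMod k)) : ∑ j, steps S j = 2 * #S - k := by
  have hcard := card_filter_add_card_filter_not (s := (univ : Finset (ZMod k))) (· ∈ S)
  rw [filter_univ_mem, card_univ, ZMod.card] at hcard
  simp only [steps, sum_ite, sum_const, filter_univ_mem, nsmul_eq_mul]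
  omega

theorem exists_pos_add_one_sub_eq_of_sum_eq_zero {f : ZMod k → ℤ} (hf : ∑ j, f j = 0) :
    ∃ i : ZMod k → ℕ, (∀ j, 1 ≤ i j) ∧ (∃ j, i j = 1) ∧ ∀ j, (i (j + 1) : ℤ) - i j = f j := by
  obtain ⟨g, hg⟩ := ZMod.exists_add_one_eq_add_of_sum_eq_zero hf
  obtain ⟨j₀, hj₀⟩ := Finite.exists_min g
  have hcast : ∀ j, ((g j - g j₀ + 1).toNat : ℤ) = g j - g j₀ + 1 := fun j =>
    Int.toNat_of_nonneg (by linarith [hj₀ j])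
  refine ⟨fun j => (g j - g j₀ + 1).toNat, fun j => ?_, ⟨j₀, by simp⟩, fun j => ?_⟩
  · dsimp only; have := hj₀ j; omega
  · rw [hcast, hcast, hg]; ring

theorem eq_of_add_one_sub_eq {i i' : ZMod k → ℕ} (hpos : ∀ j, 1 ≤ i j) (hone : ∃ j, i j = 1)
    (hpos' : ∀ j, 1 ≤ i' j) (hone' : ∃ j, i' j = 1)
    (h : ∀ j, (i (j + 1) : ℤ) - i j = i' (j + 1) - i' j) : i = i' := by
  set d : ZMod k → ℤ := fun j => i j - i' j
  have hd : ∀ j, d j = d 0 := ZMod.apply_eq_apply_zero_of_add_one fun j => by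
    simp only [d]; linarith [h j]
  obtain ⟨j₀, hj₀⟩ := hone
  obtain ⟨j₁, hj₁⟩ := hone'
  have h₀ : d 0 ≤ 0 := by have := hd j₀; have := hpos' j₀; simp only [d] at *; omega
  have h₁ : 0 ≤ d 0 := by have := hd j₁; have := hpos j₁; simp only [d] at *; omega
  funext j
  have := hd j
  simp only [d] at this h₀ h₁
  omega

def upSteps (i : ZMod k → ℕ) : Finset (ZMod k) := univ.filter fun j => i j < i (j + 1)

theorem add_one_sub_eq_steps_upSteps {i : ZMod k → ℕ}
    (hstep : ∀ j, ((i j : ℤ) - i (j + 1)).natAbs = 1) (j : ZMod k) :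
    (i (j + 1) : ℤ) - i j = steps (upSteps i) j := by
  have := hstep j
  simp only [steps, upSteps, mem_filter, mem_univ, true_and]
  split_ifs <;> omega

theorem two_mul_card_upSteps {i : ZMod k → ℕ}
    (hstep : ∀ j, ((i j : ℤ) - i (j + 1)).natAbs = 1) : 2 * #(upSteps i) = k := by
  have htel : ∑ j, ((i (j + 1) : ℤ) - i j) = 0 := by
    rw [sum_sub_distrib, sub_eq_zero]
    exact Equiv.sum_comp (Equiv.addRight 1) (fun j => (i j : ℤ))
  simp only [add_one_sub_eq_steps_upSteps hstep, sum_steps] at htel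
  omega

def toUpSteps (i : ClosedPath k) : {S : Finset (ZMod k) // 2 * #S = k} :=
  ⟨upSteps i.1, two_mul_card_upSteps i.2.2.1⟩

theorem toUpSteps_injective : Function.Injective (toUpSteps (k := k)) := by
  rintro ⟨i, hpos, hstep, hone⟩ ⟨i', hpos', hstep', hone'⟩ h
  have hS : upSteps i = upSteps i' := congrArg Subtype.val h
  refine Subtype.ext (eq_of_add_one_sub_eq hpos hone hpos' hone' fun j => ?_)
  rw [add_one_sub_eq_steps_upSteps hstep, add_one_sub_eq_steps_upSteps hstep', hS]

theorem toUpSteps_surjective : Function.Surjective (toUpSteps (k := k)) := by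
  rintro ⟨S, hS⟩
  obtain ⟨i, hpos, hone, hi⟩ :=
    exists_pos_add_one_sub_eq_of_sum_eq_zero (f := steps S) (by rw [sum_steps]; omega)
  have hstep : ∀ j, ((i j : ℤ) - i (j + 1)).natAbs = 1 := fun j => by
    have := hi j
    unfold steps at this
    split_ifs at this <;> omega
  refine ⟨⟨i, hpos, hstep, hone⟩, Subtype.ext (steps_injective (funext fun j => ?_))⟩
  exact (add_one_sub_eq_steps_upSteps hstep j).symm.trans (hi j)

end ClosedPath

/-- The number of closed cyclic paths `(i_1,…,i_k)` (indices in `ZMod k`)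
with values in the positive integers, consecutive entries differing by exactly 1
(cyclically), and passing through the value 1, equals `k.choose (k/2)` when `k` is even
and `0` when `k` is odd. -/
theorem card_closed_paths (k : ℕ) [NeZero k] :
    Nat.card {i : ZMod k → ℕ //
      (∀ j, 1 ≤ i j) ∧
      (∀ j, ((i j : ℤ) - i (j + 1)).natAbs = 1) ∧
      (∃ j, i j = 1)} =
    if Even k then k.choose (k / 2) else 0 := by
  have hcount := card_subtype_two_mul_card_eq (ZMod k)
  rw [ZMod.card] at hcount
  rw [← hcount]
  exact Nat.card_congr
    (.ofBijective _ ⟨ClosedPath.toUpSteps_injective, ClosedPath.toUpSteps_surjective⟩)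
end

section
/- There is a bijection between the set D_{2k} of closed ±1-step paths of length 2k on the positive integers passing through 1 (indices cyclic), and the set of ±1-step walks of length 2k starting and ending at 1, obtained by vertically translating each path so that it starts at value 1. Consequently |D_{2k}| = C(2k, k). -/
set_option maxHeartbeats 1000000

namespace ClosedPathsAux


def g (n : ℕ) (s : Fin n → Bool) (m : ℕ) : ℤ :=
  if h : m < n then (if s ⟨m, h⟩ then 1 else -1) else 0

def W (n : ℕ) (s : Fin n → Bool) (j : Fin (n + 1)) : ℤ :=
  1 + ∑ i ∈ Finset.range j.val, g n s i

lemma W_zero (n : ℕ) (s : Fin n → Bool) : W n s 0 = 1 := by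
  simp [W]

lemma W_succ (n : ℕ) (s : Fin n → Bool) (j : Fin n) :
    W n s j.succ = W n s j.castSucc + (if s j then 1 else -1) := by
  simp only [W, Fin.val_succ, Fin.coe_castSucc, Finset.sum_range_succ, g, j.isLt, dif_pos,
    Fin.eta]
  ring

lemma sum_ite_count (n : ℕ) (s : Fin n → Bool) :
    (∑ i : Fin n, if s i then (1:ℤ) else -1) =
      2 * (Finset.univ.filter fun i => s i = true).card - n := by
  rw [Finset.sum_ite]
  have h := Finset.card_filter_add_card_filter_not (s := (Finset.univ : Finset (Fin n)))
    (fun i => s i = true)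
  simp only [Finset.card_univ, Fintype.card_fin] at h
  simp only [Finset.sum_const, nsmul_eq_mul, mul_one, mul_neg_one]
  push_cast [← h]
  ring

lemma W_last (n : ℕ) (s : Fin n → Bool) :
    W n s (Fin.last n) = 1 + (2 * (Finset.univ.filter fun i => s i = true).card - n) := by
  rw [W, ← sum_ite_count]
  congr 1
  rw [Fin.val_last, Finset.sum_range fun i => g n s i]
  refine Finset.sum_congr rfl fun i _ => ?_
  simp [g, i.isLt]

def toSteps (n : ℕ) (w : Fin (n + 1) → ℤ) (j : Fin n) : Bool :=
  decide (w j.castSucc < w j.succ)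

lemma toSteps_W (n : ℕ) (s : Fin n → Bool) : toSteps n (W n s) = s := by
  funext j
  have h := W_succ n s j
  by_cases hs : s j = true <;> simp [toSteps, h, hs]

lemma W_toSteps (n : ℕ) (w : Fin (n + 1) → ℤ)
    (hstep : ∀ j : Fin n, |w j.castSucc - w j.succ| = 1) (h0 : w 0 = 1) :
    W n (toSteps n w) = w := by
  funext j
  induction j using Fin.induction with
  | zero => simp [W_zero, h0]
  | succ i ih =>
    rw [W_succ, ih]
    rcases (abs_eq (by norm_num)).mp (hstep i) with h | h
    · have : w i.succ = w i.castSucc - 1 := by linarith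
      rw [this]
      have hlt : ¬ w i.castSucc < w i.castSucc - 1 := by linarith
      simp [toSteps, this, hlt]
      ring
    · have : w i.succ = w i.castSucc + 1 := by linarith
      have hlt : w i.castSucc < w i.castSucc + 1 := by linarith
      simp [toSteps, this, hlt]


lemma abs_W_step (n : ℕ) (s : Fin n → Bool) (j : Fin n) :
    |W n s j.castSucc - W n s j.succ| = 1 := by
  rw [W_succ]; by_cases hs : s j = true <;> simp [hs]

lemma W_last_eq_one_iff (k : ℕ) (s : Fin (2*k) → Bool) :
    W (2*k) s (Fin.last (2*k)) = 1 ↔ (Finset.univ.filter fun i => s i = true).card = k := by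
  rw [W_last]; omega

def walkEquivSteps (k : ℕ) :
    {w : Fin (2*k+1) → ℤ // (∀ j : Fin (2*k), |w j.castSucc - w j.succ| = 1) ∧
      w 0 = 1 ∧ w (Fin.last (2*k)) = 1}
    ≃ {s : Fin (2*k) → Bool // (Finset.univ.filter fun i => s i = true).card = k} where
  toFun w := ⟨toSteps _ w.1, by
    rw [← W_last_eq_one_iff, W_toSteps _ _ w.2.1 w.2.2.1]
    exact w.2.2.2⟩
  invFun s := ⟨W _ s.1, fun j => abs_W_step _ _ j, W_zero _ _,
    (W_last_eq_one_iff k s.1).mpr s.2⟩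
  left_inv w := Subtype.ext (W_toSteps _ _ w.2.1 w.2.2.1)
  right_inv s := Subtype.ext (toSteps_W _ _)

def stepsEquivFinsets (n k : ℕ) :
    {s : Fin n → Bool // (Finset.univ.filter fun i => s i = true).card = k}
    ≃ {A : Finset (Fin n) // A.card = k} where
  toFun s := ⟨_, s.2⟩
  invFun A := ⟨fun i => decide (i ∈ A.1), by simp [A.2]⟩
  left_inv s := Subtype.ext (by funext i; simp)
  right_inv A := Subtype.ext (by simp)

lemma card_walks (k : ℕ) :
    Nat.card {w : Fin (2*k+1) → ℤ |
      (∀ j : Fin (2*k), |w j.castSucc - w j.succ| = 1) ∧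
      w 0 = 1 ∧ w (Fin.last (2*k)) = 1} = (2*k).choose k := by
  have h := Nat.card_congr ((walkEquivSteps k).trans (stepsEquivFinsets (2*k) k))
  have h2 : Nat.card {A : Finset (Fin (2*k)) // A.card = k} = (2*k).choose k := by
    simp [Nat.card_eq_fintype_card, Fintype.card_finset_len]
  exact h.trans h2


end ClosedPathsAux

open ClosedPathsAux in
/-- Translating each closed cyclic ±1-step path on the positive integers of
length `2k` passing through 1 so that it starts at value 1 gives a bijection between
`D_{2k}` and the ±1-step walks of length `2k` (in `ℤ`) starting and ending at 1.
Consequently `|D_{2k}| = (2k).choose k`. -/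
theorem equiv_closed_paths_walks (k : ℕ) (hk : 0 < k) [NeZero (2 * k)] :
    (Function.Injective
      (fun i : {i : ZMod (2 * k) → ℕ //
          (∀ j, 1 ≤ i j) ∧
          (∀ j, ((i j : ℤ) - i (j + 1)).natAbs = 1) ∧
          (∃ j, i j = 1)} =>
        (fun j : Fin (2 * k + 1) => ((i.1 ((j : ℕ) : ZMod (2 * k)) : ℤ) - i.1 0 + 1)))) ∧
    (Set.range
      (fun i : {i : ZMod (2 * k) → ℕ //
          (∀ j, 1 ≤ i j) ∧
          (∀ j, ((i j : ℤ) - i (j + 1)).natAbs = 1) ∧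
          (∃ j, i j = 1)} =>
        (fun j : Fin (2 * k + 1) => ((i.1 ((j : ℕ) : ZMod (2 * k)) : ℤ) - i.1 0 + 1))) =
      {w : Fin (2 * k + 1) → ℤ |
        (∀ j : Fin (2 * k), |w j.castSucc - w j.succ| = 1) ∧
        w 0 = 1 ∧ w (Fin.last (2 * k)) = 1}) ∧
    Nat.card {i : ZMod (2 * k) → ℕ //
      (∀ j, 1 ≤ i j) ∧
      (∀ j, ((i j : ℤ) - i (j + 1)).natAbs = 1) ∧
      (∃ j, i j = 1)} = (2 * k).choose k := by
  have h2 : 1 < 2 * k := by omega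
  have hvlt : ∀ x : ZMod (2 * k), x.val < 2 * k + 1 :=
    fun x => Nat.lt_succ_of_lt (ZMod.val_lt x)
  -- Injectivity
  have hinj : Function.Injective
      (fun i : {i : ZMod (2 * k) → ℕ //
          (∀ j, 1 ≤ i j) ∧
          (∀ j, ((i j : ℤ) - i (j + 1)).natAbs = 1) ∧
          (∃ j, i j = 1)} =>
        (fun j : Fin (2 * k + 1) => ((i.1 ((j : ℕ) : ZMod (2 * k)) : ℤ) - i.1 0 + 1))) := by
    intro a b hab
    have key : ∀ x : ZMod (2 * k), (a.1 x : ℤ) - a.1 0 = (b.1 x : ℤ) - b.1 0 := by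
      intro x
      have h := congrFun hab ⟨x.val, hvlt x⟩
      simp only at h
      rwa [show (((⟨x.val, hvlt x⟩ : Fin (2 * k + 1)) : ℕ) : ZMod (2 * k)) = x from by
          simp [ZMod.natCast_rightInverse x],
        add_left_inj] at h
    obtain ⟨ja, hja⟩ := a.2.2.2
    obtain ⟨jb, hjb⟩ := b.2.2.2
    have hc1 : (a.1 0 : ℤ) - b.1 0 ≤ 0 := by
      have := key ja
      have hb1 := b.2.1 ja
      rw [hja] at this
      omega
    have hc2 : (0 : ℤ) ≤ (a.1 0 : ℤ) - b.1 0 := by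
      have := key jb
      have ha1 := a.2.1 jb
      rw [hjb] at this
      omega
    have hc : (a.1 0 : ℤ) = b.1 0 := by omega
    refine Subtype.ext (funext fun x => ?_)
    have := key x
    rw [hc] at this
    exact_mod_cast sub_left_inj.mp this
  -- Range
  have hrange : Set.range
      (fun i : {i : ZMod (2 * k) → ℕ //
          (∀ j, 1 ≤ i j) ∧
          (∀ j, ((i j : ℤ) - i (j + 1)).natAbs = 1) ∧
          (∃ j, i j = 1)} =>
        (fun j : Fin (2 * k + 1) => ((i.1 ((j : ℕ) : ZMod (2 * k)) : ℤ) - i.1 0 + 1))) =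
      {w : Fin (2 * k + 1) → ℤ |
        (∀ j : Fin (2 * k), |w j.castSucc - w j.succ| = 1) ∧
        w 0 = 1 ∧ w (Fin.last (2 * k)) = 1} := by
    ext w
    simp only [Set.mem_range, Set.mem_setOf_eq]
    constructor
    · rintro ⟨i, rfl⟩
      refine ⟨fun j => ?_, ?_, ?_⟩
      · have h := i.2.2.1 ((j : ℕ) : ZMod (2 * k))
        have e2 : (((j.castSucc : Fin (2 * k + 1)) : ℕ) : ZMod (2 * k))
            = ((j : ℕ) : ZMod (2 * k)) := by
          simp [Fin.coe_castSucc]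
        have e : (((j.succ : Fin (2 * k + 1)) : ℕ) : ZMod (2 * k))
            = ((j : ℕ) : ZMod (2 * k)) + 1 := by
          rw [Fin.val_succ]; push_cast; ring
        simp only [e, e2]
        rw [show ((i.1 ((j : ℕ) : ZMod (2 * k)) : ℤ) - i.1 0 + 1)
              - ((i.1 (((j : ℕ) : ZMod (2 * k)) + 1) : ℤ) - i.1 0 + 1)
            = (i.1 ((j : ℕ) : ZMod (2 * k)) : ℤ)
              - i.1 (((j : ℕ) : ZMod (2 * k)) + 1) from by ring]
        rw [Int.abs_eq_natAbs, h]
        norm_num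
      · simp
      · simp [Fin.val_last, ZMod.natCast_self]
    · rintro ⟨hstep, h0, hlast⟩
      obtain ⟨j0, -, hj0⟩ := Finset.exists_min_image (Finset.univ : Finset (Fin (2 * k + 1))) w
        ⟨0, Finset.mem_univ 0⟩
      set m := w j0 with hm
      have hmle : ∀ j, m ≤ w j := fun j => hj0 j (Finset.mem_univ j)
      have hcast : ∀ x : ZMod (2 * k),
          (((w ⟨x.val, hvlt x⟩ - m).toNat + 1 : ℕ) : ℤ) = w ⟨x.val, hvlt x⟩ - m + 1 := by
        intro x
        push_cast [Int.toNat_of_nonneg (sub_nonneg.mpr (hmle _))]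
        ring
      have hv1 : ∀ x : ZMod (2 * k), (x + 1).val = (x.val + 1) % (2 * k) := by
        intro x
        rw [ZMod.val_add, ZMod.val_one_eq_one_mod, Nat.mod_eq_of_lt h2]
      refine ⟨⟨fun x => (w ⟨x.val, hvlt x⟩ - m).toNat + 1, fun x => Nat.le_add_left 1 _,
        fun x => ?_, ?_⟩, ?_⟩
      · -- steps
        rw [hcast, hcast, show (w ⟨x.val, hvlt x⟩ - m + 1) - (w ⟨(x+1).val, hvlt _⟩ - m + 1)
            = w ⟨x.val, hvlt x⟩ - w ⟨(x+1).val, hvlt _⟩ from by ring]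
        have habs : |w ⟨x.val, hvlt x⟩ - w ⟨(x + 1).val, hvlt _⟩| = 1 := by
          by_cases hlt : x.val + 1 < 2 * k
          · have hv : (x + 1).val = x.val + 1 := by rw [hv1, Nat.mod_eq_of_lt hlt]
            have hs := hstep ⟨x.val, ZMod.val_lt x⟩
            simp only [Fin.castSucc_mk, Fin.succ_mk] at hs
            rw [show (⟨(x + 1).val, hvlt _⟩ : Fin (2 * k + 1)) = ⟨x.val + 1, by omega⟩ from by
              simp [Fin.ext_iff, hv]]
            exact hs
          · have hxv : x.val = 2 * k - 1 := by have := ZMod.val_lt x; omega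
            have hv : (x + 1).val = 0 := by
              rw [hv1, show x.val + 1 = 2 * k from by omega, Nat.mod_self]
            have hs := hstep ⟨2 * k - 1, by omega⟩
            simp only [Fin.castSucc_mk, Fin.succ_mk] at hs
            rw [show (⟨x.val, hvlt x⟩ : Fin (2 * k + 1)) = ⟨2 * k - 1, by omega⟩ from by
                simp [Fin.ext_iff, hxv],
              show (⟨(x + 1).val, hvlt _⟩ : Fin (2 * k + 1)) = 0 from by
                simp [Fin.ext_iff, hv],
              h0]
            rw [show (⟨2 * k - 1 + 1, by omega⟩ : Fin (2 * k + 1)) = Fin.last (2 * k) from by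
                simp [Fin.ext_iff]; omega, hlast] at hs
            exact hs
        have : (w ⟨x.val, hvlt x⟩ - w ⟨(x + 1).val, hvlt _⟩).natAbs = 1 := by
          rw [Int.abs_eq_natAbs] at habs
          exact_mod_cast habs
        exact this
      · -- exists value 1
        by_cases hj : j0.val < 2 * k
        · refine ⟨(j0.val : ZMod (2 * k)), ?_⟩
          have hval : ((j0.val : ZMod (2 * k))).val = j0.val := ZMod.val_natCast_of_lt hj
          beta_reduce
          rw [show (⟨((j0.val : ZMod (2 * k))).val, hvlt _⟩ : Fin (2 * k + 1)) = j0 from by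
            simp [Fin.ext_iff, hval]]
          simp [hm]
        · have hj0v : j0.val = 2 * k := by have := j0.isLt; omega
          have hm1 : m = 1 := by
            rw [hm, show j0 = Fin.last (2 * k) from by simp [Fin.ext_iff, hj0v], hlast]
          refine ⟨0, ?_⟩
          beta_reduce
          rw [show (⟨(0 : ZMod (2 * k)).val, hvlt _⟩ : Fin (2 * k + 1)) = 0 from by
            simp [Fin.ext_iff, ZMod.val_zero]]
          rw [h0, hm1]
          simp
      · -- maps back to w
        funext j
        simp only
        rw [hcast, hcast]
        have h0v : (0 : ZMod (2 * k)).val = 0 := ZMod.val_zero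
        rw [show (⟨(0 : ZMod (2 * k)).val, hvlt _⟩ : Fin (2 * k + 1)) = 0 from by
          simp [Fin.ext_iff, h0v]]
        rw [h0]
        have hxv : (((j : ℕ) : ZMod (2 * k))).val = (j : ℕ) % (2 * k) := ZMod.val_natCast _ _
        by_cases hj : (j : ℕ) < 2 * k
        · rw [show (⟨(((j : ℕ) : ZMod (2 * k))).val, hvlt _⟩ : Fin (2 * k + 1)) = j from by
            simp [Fin.ext_iff, hxv, Nat.mod_eq_of_lt hj]]
          ring
        · have hjv : (j : ℕ) = 2 * k := by have := j.isLt; omega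
          rw [show (⟨(((j : ℕ) : ZMod (2 * k))).val, hvlt _⟩ : Fin (2 * k + 1)) = 0 from by
            simp [Fin.ext_iff, hxv, hjv]]
          rw [h0, show j = Fin.last (2 * k) from by simp [Fin.ext_iff, hjv], hlast]
          ring
  refine ⟨hinj, hrange, ?_⟩
  have hcard := card_walks k
  rw [← hrange] at hcard
  rw [← hcard]
  exact Nat.card_congr (Equiv.ofInjective _ hinj)
end

section
/- For any closed cyclic ±1-step path i of length 2k on the positive integers with period p, if the path hits height h at exactly m indices within one period, then the sum over all cyclic shifts j of i (i.e., over the cyclic equivalence class [i]) of ρ_j(h), where ρ_j counts hits of h with the first entry counted twice, equals (2k+1)m, independent of the period p. -/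
open scoped Classical

section Aux

variable {k d : ℕ} [NeZero (2 * k)]

omit [NeZero (2 * k)] in
lemma mult_per (i : ZMod (2 * k) → ℕ)
    (hper : ∀ j, i (j + (d : ZMod (2 * k))) = i j) (t : ℕ) :
    ∀ j, i (j + ((t * d : ℕ) : ZMod (2 * k))) = i j := by
  induction t with
  | zero => simp
  | succ t ih =>
      intro j
      have he : ((t + 1) * d : ℕ) = t * d + d := by ring
      rw [he, Nat.cast_add, ← add_assoc, hper, ih]

lemma shift_decomp (i : ZMod (2 * k) → ℕ)
    (hper : ∀ j, i (j + (d : ZMod (2 * k))) = i j) (a : ZMod (2 * k)) :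
    ∀ j, i (j + a) = i (j + ((a.val % d : ℕ) : ZMod (2 * k))) := by
  intro j
  have h1 : a = ((a.val / d * d : ℕ) : ZMod (2 * k)) + ((a.val % d : ℕ) : ZMod (2 * k)) := by
    calc a = ((a.val : ℕ) : ZMod (2 * k)) := (ZMod.natCast_rightInverse a).symm
      _ = ((a.val / d * d + a.val % d : ℕ) : ZMod (2 * k)) := by
          rw [Nat.div_add_mod']
      _ = _ := by push_cast; ring
  calc i (j + a)
      = i ((j + ((a.val % d : ℕ) : ZMod (2 * k))) + ((a.val / d * d : ℕ) : ZMod (2 * k))) := by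
        congr 1
        conv_lhs => rw [h1]
        ring
    _ = i (j + ((a.val % d : ℕ) : ZMod (2 * k))) := mult_per i hper (a.val / d) _

lemma period_dvd (i : ZMod (2 * k) → ℕ)
    (hd : 0 < d)
    (hper : ∀ j, i (j + (d : ZMod (2 * k))) = i j)
    (hmin : ∀ q : ℕ, 0 < q → q < d → ¬ (∀ j, i (j + (q : ZMod (2 * k))) = i j))
    (a : ZMod (2 * k)) (ha : ∀ j, i (j + a) = i j) : d ∣ a.val := by
  have key : ∀ j, i (j + ((a.val % d : ℕ) : ZMod (2 * k))) = i j := by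
    intro j
    rw [← shift_decomp i hper a j, ha]
  rcases Nat.eq_zero_or_pos (a.val % d) with h0 | h0
  · exact Nat.dvd_of_mod_eq_zero h0
  · exact absurd key (hmin _ h0 (Nat.mod_lt _ hd))

end Aux

/-- For a closed cyclic ±1-step path `i` of length `2k` on the positive
integers with (minimal) period `d` (so its cyclic equivalence class consists of `d`
distinct paths), if the path hits height `h` at exactly `m` indices within one period,
then the sum over the cyclic equivalence class of `i` of `ρ_w(h)` — the number of
indices at which `w` equals `h`, with the first index counted twice — equals
`(2k+1)·m`, independently of the period. -/
theorem sum_rho_over_cyclic_class (k h d m : ℕ) (hk : 0 < k) [NeZero (2 * k)]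
    (i : ZMod (2 * k) → ℕ)
    (hpos : ∀ j, 1 ≤ i j)
    (hstep : ∀ j, ((i j : ℤ) - i (j + 1)).natAbs = 1)
    (hd : 0 < d) (hdvd : d ∣ 2 * k)
    (hper : ∀ j, i (j + (d : ZMod (2 * k))) = i j)
    (hmin : ∀ q : ℕ, 0 < q → q < d → ¬ (∀ j, i (j + (q : ZMod (2 * k))) = i j))
    (hm : ((Finset.range d).filter (fun a => i (a : ZMod (2 * k)) = h)).card = m) :
    ∑ w ∈ Finset.image (fun a : ZMod (2 * k) => fun j => i (j + a)) Finset.univ,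
      ((Finset.univ.filter (fun a : ZMod (2 * k) => w a = h)).card
        + (if w 0 = h then 1 else 0)) = (2 * k + 1) * m := by
  have hN0 : 0 < 2 * k := by positivity
  have hdN : d ≤ 2 * k := Nat.le_of_dvd hN0 hdvd
  -- translate hm (which is stated over a coerced finset) into a plain count over range d
  have hm' : ((Finset.range d).filter (fun a : ℕ => i ((a : ℕ) : ZMod (2 * k)) = h)).card = m := by
    rw [← hm]
    have h1 : (do let a ← Finset.range d; pure ((a : ℕ) : ZMod (2 * k)) : Finset (ZMod (2 * k)))
        = (Finset.range d).image (fun a : ℕ => ((a : ℕ) : ZMod (2 * k))) := by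
      simp [Finset.image]
      ext x; simp
    rw [h1, Finset.filter_image, Finset.card_image_of_injOn]
    intro x hx y hy hxy
    simp only [Finset.coe_filter, Set.mem_setOf_eq, Finset.mem_range] at hx hy
    have h2 := ZMod.val_natCast_of_lt (lt_of_lt_of_le hx.1 hdN)
    have h3 := ZMod.val_natCast_of_lt (lt_of_lt_of_le hy.1 hdN)
    have h4 := congrArg ZMod.val hxy
    simp only at h4
    omega
  set F : ZMod (2 * k) → (ZMod (2 * k) → ℕ) := fun a => fun j => i (j + a) with hF
  -- image over univ = image over range d
  have himg : Finset.image F Finset.univ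
      = Finset.image (fun a : ℕ => F ((a : ℕ) : ZMod (2 * k))) (Finset.range d) := by
    apply Finset.Subset.antisymm
    · intro w hw
      rw [Finset.mem_image] at hw ⊢
      obtain ⟨a, _, rfl⟩ := hw
      refine ⟨a.val % d, Finset.mem_range.2 (Nat.mod_lt _ hd), ?_⟩
      funext j
      exact (shift_decomp i hper a j).symm
    · intro w hw
      rw [Finset.mem_image] at hw ⊢
      obtain ⟨a, _, rfl⟩ := hw
      exact ⟨((a : ℕ) : ZMod (2 * k)), Finset.mem_univ _, rfl⟩
  -- injectivity on range d
  have hinj : ∀ a ∈ Finset.range d, ∀ b ∈ Finset.range d,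
      F ((a : ℕ) : ZMod (2 * k)) = F ((b : ℕ) : ZMod (2 * k)) → a = b := by
    have hab' : ∀ x y : ℕ, x < d → y < d →
        F ((x : ℕ) : ZMod (2 * k)) = F ((y : ℕ) : ZMod (2 * k)) → y ≤ x → x = y := by
      intro x y hx hy hxy hle
      have hperiod : ∀ j, i (j + ((x - y : ℕ) : ZMod (2 * k))) = i j := by
        intro j
        have hc := congrFun hxy (j - ((y : ℕ) : ZMod (2 * k)))
        simp only [hF] at hc
        rw [sub_add_cancel] at hc
        have hcast : ((x - y : ℕ) : ZMod (2 * k))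
            = ((x : ℕ) : ZMod (2 * k)) - ((y : ℕ) : ZMod (2 * k)) := by
          push_cast [Nat.cast_sub hle]; ring
        rw [hcast, ← hc]
        ring_nf
      have hdvd' : d ∣ (((x - y : ℕ) : ZMod (2 * k))).val :=
        period_dvd i hd hper hmin _ hperiod
      have hvlt : x - y < 2 * k := lt_of_lt_of_le (lt_of_le_of_lt (Nat.sub_le _ _) hx) hdN
      rw [ZMod.val_natCast_of_lt hvlt] at hdvd'
      have hlt : x - y < d := lt_of_le_of_lt (Nat.sub_le _ _) hx
      have h0' : x - y = 0 := Nat.eq_zero_of_dvd_of_lt hdvd' hlt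
      omega
    intro a ha b hb hab
    rw [Finset.mem_range] at ha hb
    rcases le_total b a with hle | hle
    · exact hab' a b ha hb hab hle
    · exact (hab' b a hb ha hab.symm hle).symm
  rw [himg, Finset.sum_image hinj]
  -- count for a single shift equals count for the unshifted path
  have hshiftcard : ∀ a : ZMod (2 * k),
      (Finset.univ.filter (fun x : ZMod (2 * k) => i (x + a) = h)).card
        = (Finset.univ.filter (fun x : ZMod (2 * k) => i x = h)).card := by
    intro a
    apply Finset.card_bij' (fun x _ => x + a) (fun x _ => x - a)
    · intro x hx
      simp only [Finset.mem_filter, Finset.mem_univ, true_and] at hx ⊢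
      exact hx
    · intro x hx
      simp only [Finset.mem_filter, Finset.mem_univ, true_and] at hx ⊢
      rw [sub_add_cancel]; exact hx
    · intro x _; rw [add_sub_cancel_right]
    · intro x _; rw [sub_add_cancel]
  -- count over ZMod = count over range (2k)
  have hcirc : (Finset.univ.filter (fun x : ZMod (2 * k) => i x = h)).card
      = ((Finset.range (2 * k)).filter (fun n : ℕ => i ((n : ℕ) : ZMod (2 * k)) = h)).card := by
    apply Finset.card_bij (fun x _ => x.val)
    · intro x hx
      simp only [Finset.mem_filter, Finset.mem_univ, true_and, Finset.mem_range] at hx ⊢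
      refine ⟨x.val_lt, ?_⟩
      rw [ZMod.natCast_rightInverse x]
      exact hx
    · intro x _ y _ hxy
      exact ZMod.val_injective _ hxy
    · intro n hn
      simp only [Finset.mem_filter, Finset.mem_range] at hn
      refine ⟨((n : ℕ) : ZMod (2 * k)), Finset.mem_filter.2 ⟨Finset.mem_univ _, hn.2⟩, ?_⟩
      rw [ZMod.val_natCast_of_lt hn.1]
  -- periodic counting
  have hperiodic : Function.Periodic (fun n : ℕ => i ((n : ℕ) : ZMod (2 * k)) = h) d := by
    intro n
    show (i (((n + d : ℕ)) : ZMod (2 * k)) = h) = _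
    rw [Nat.cast_add, hper]
  have hblocks : ∀ t : ℕ,
      ((Finset.range (t * d)).filter (fun n : ℕ => i ((n : ℕ) : ZMod (2 * k)) = h)).card
        = t * m := by
    intro t
    induction t with
    | zero => simp
    | succ t ih =>
        have he : (t + 1) * d = t * d + d := by ring
        rw [he, Finset.range_eq_Ico, ← Finset.Ico_union_Ico_eq_Ico (Nat.zero_le (t * d))
          (Nat.le_add_right _ _), Finset.filter_union, Finset.card_union_of_disjoint]
        · rw [← Finset.range_eq_Ico, ih,
            Nat.filter_Ico_card_eq_of_periodic (t * d) d _ hperiodic]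
          have hc : d.count (fun n : ℕ => i ((n : ℕ) : ZMod (2 * k)) = h) = m := by
            rw [Nat.count_eq_card_filter_range]
            exact hm'
          rw [hc]; ring
        · exact Finset.disjoint_filter_filter
            (Finset.Ico_disjoint_Ico_consecutive 0 (t * d) (t * d + d))
  have htotal : ((Finset.range (2 * k)).filter
      (fun n : ℕ => i ((n : ℕ) : ZMod (2 * k)) = h)).card = (2 * k / d) * m := by
    have he : (2 * k / d) * d = 2 * k := Nat.div_mul_cancel hdvd
    have hb := hblocks (2 * k / d)
    rwa [he] at hb
  calc ∑ a ∈ Finset.range d,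
        ((Finset.univ.filter (fun x : ZMod (2 * k) => F ((a : ℕ) : ZMod (2 * k)) x = h)).card
          + (if F ((a : ℕ) : ZMod (2 * k)) 0 = h then 1 else 0))
      = ∑ a ∈ Finset.range d,
        ((2 * k / d) * m + (if i ((a : ℕ) : ZMod (2 * k)) = h then 1 else 0)) := by
        apply Finset.sum_congr rfl
        intro a _
        have hF0 : F ((a : ℕ) : ZMod (2 * k)) 0 = i ((a : ℕ) : ZMod (2 * k)) := by
          simp [hF]
        rw [hF0]
        congr 1
        simp only [hF]
        rw [hshiftcard, hcirc, htotal]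
    _ = d * ((2 * k / d) * m) + m := by
        rw [Finset.sum_add_distrib, Finset.sum_const, Finset.card_range, smul_eq_mul]
        congr 1
        rw [← hm', Finset.card_filter]
    _ = (2 * k + 1) * m := by
        rw [← mul_assoc, Nat.mul_div_cancel' hdvd]
        ring
end

section
/- There is a bijection between D_{2k}^h, the set of closed cyclic ±1-step paths of length 2k on positive integers containing the value 1 and with first entry h, and C_{2k}^h, the set of (non-cyclic) ±1-step paths (i_1,...,i_{2k+1}) on positive integers with i_1 = 1 and i_{2k+1} = 2h-1. -/
/-!
Read a cyclic path of `D_n^h` as a walk `f` on `[0, n]` with `f 0 = f n = h`, and cut it at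
the last time `m` it visits `1`. Reversing `f` on `[0, m]` gives a walk from `1` to `h`; after `m`
the walk stays `≥ 2` and returns to `h`, so raising that part by `h - 1` continues it to `2h - 1`.
Conversely, in a walk from `1` to `2h - 1` everything after the last visit `m` to `h` lies above
`h` (discrete intermediate values), so reversing `[0, m]` and lowering the rest by `h - 1` gives a
cyclic path through `1`. The last visit to `1` of the first walk is the last visit to `h` of the
second, which makes the two constructions mutually inverse.
-/

open Set

namespace PathReflection

theorem exists_eq_of_natAbs_sub_eq_one {f : ℕ → ℕ} {a b v : ℕ} (hab : a ≤ b)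
    (hstep : ∀ t, a ≤ t → t < b → ((f t : ℤ) - f (t + 1)).natAbs = 1)
    (ha : f a ≤ v) (hb : v ≤ f b) : ∃ t, a ≤ t ∧ t ≤ b ∧ f t = v := by
  induction b, hab using Nat.le_induction with
  | base => exact ⟨a, le_rfl, le_rfl, by omega⟩
  | succ b hab ih =>
    by_cases hvb : v ≤ f b
    · obtain ⟨t, hat, htb, hft⟩ := ih (fun t h1 h2 => hstep t h1 (by omega)) hvb
      exact ⟨t, hat, by omega, hft⟩
    · have := hstep b hab (by omega)
      exact ⟨b + 1, by omega, le_rfl, by omega⟩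

def lastHit (f : ℕ → ℕ) (v n : ℕ) : ℕ := Nat.findGreatest (fun t => f t = v) n

variable {f g : ℕ → ℕ} {v n m : ℕ}

theorem lastHit_le : lastHit f v n ≤ n := Nat.findGreatest_le n

theorem apply_lastHit (hv : ∃ t ≤ n, f t = v) : f (lastHit f v n) = v := by
  obtain ⟨t, htn, hft⟩ := hv
  exact Nat.findGreatest_spec (P := fun t => f t = v) htn hft

theorem apply_ne_of_lastHit_lt {s : ℕ} (hs : lastHit f v n < s) (hsn : s ≤ n) : f s ≠ v :=
  Nat.findGreatest_is_greatest (P := fun t => f t = v) hs hsn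

theorem lastHit_eq (hmn : m ≤ n) (hfm : f m = v) (hne : ∀ s, m < s → s ≤ n → f s ≠ v) :
    lastHit f v n = m :=
  Nat.findGreatest_eq_iff.2 ⟨hmn, fun _ => hfm, hne⟩

theorem lastHit_congr (hfg : EqOn f g (Iic n)) : lastHit f v n = lastHit g v n := by
  refine Nat.findGreatest_eq_iff.2 ⟨lastHit_le, fun h0 => ?_, fun s hs hsn => ?_⟩
  · rw [hfg (mem_Iic.2 lastHit_le)]
    exact Nat.findGreatest_of_ne_zero (P := fun t => g t = v) rfl h0
  · rw [hfg (mem_Iic.2 hsn)]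
    exact apply_ne_of_lastHit_lt hs hsn

def reflectPrefix (m : ℕ) (φ : ℕ → ℕ) (f : ℕ → ℕ) (s : ℕ) : ℕ :=
  if s ≤ m then f (m - s) else φ (f s)

theorem reflectPrefix_of_le {φ : ℕ → ℕ} {s : ℕ} (hs : s ≤ m) :
    reflectPrefix m φ f s = f (m - s) :=
  if_pos hs

theorem reflectPrefix_of_lt {φ : ℕ → ℕ} {s : ℕ} (hs : m < s) :
    reflectPrefix m φ f s = φ (f s) :=
  if_neg (not_le.2 hs)

theorem reflectPrefix_reflectPrefix (φ ψ : ℕ → ℕ) (f : ℕ → ℕ) (s : ℕ) :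
    reflectPrefix m ψ (reflectPrefix m φ f) s = if s ≤ m then f s else ψ (φ (f s)) := by
  unfold reflectPrefix
  split_ifs <;> first | omega | congr 1; omega

theorem reflectPrefix_congr {φ : ℕ → ℕ} (hfg : EqOn f g (Iic n)) (hmn : m ≤ n) :
    EqOn (reflectPrefix m φ f) (reflectPrefix m φ g) (Iic n) := by
  intro s hs
  rw [mem_Iic] at hs
  unfold reflectPrefix
  split_ifs
  · exact hfg (mem_Iic.2 (by omega))
  · rw [hfg (mem_Iic.2 hs)]

theorem reflectPrefix_natAbs_sub_eq_one {φ : ℕ → ℕ} (δ : ℤ) (hmn : m ≤ n)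
    (hstep : ∀ t < n, ((f t : ℤ) - f (t + 1)).natAbs = 1)
    (hφ : ∀ t, m < t → t ≤ n → (φ (f t) : ℤ) = f t + δ)
    (hjoin : m < n → ((f 0 : ℤ) - φ (f (m + 1))).natAbs = 1) :
    ∀ t < n, ((reflectPrefix m φ f t : ℤ) - reflectPrefix m φ f (t + 1)).natAbs = 1 := by
  intro t ht
  unfold reflectPrefix
  rcases lt_trichotomy (t + 1) (m + 1) with hlt | heq | hgt
  · rw [if_pos (by omega), if_pos (by omega)]
    have := hstep (m - (t + 1)) (by omega)
    rw [show m - (t + 1) + 1 = m - t by omega] at this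
    omega
  · rw [if_pos (by omega), if_neg (by omega), show m - t = 0 by omega, show t + 1 = m + 1 by omega]
    exact hjoin (by omega)
  · rw [if_neg (by omega), if_neg (by omega), hφ t (by omega) (by omega),
      hφ (t + 1) (by omega) (by omega)]
    have := hstep t ht
    omega

-- Walks are indexed by `ℕ`; only their values on `[0, n]` matter.
structure IsWalk (n : ℕ) (f : ℕ → ℕ) : Prop where
  pos : ∀ t ≤ n, 1 ≤ f t
  step : ∀ t < n, ((f t : ℤ) - f (t + 1)).natAbs = 1

structure IsClosedWalk (n h : ℕ) (f : ℕ → ℕ) : Prop extends IsWalk n f where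
  hits_one : ∃ t ≤ n, f t = 1
  start : f 0 = h
  finish : f n = h

structure IsOpenWalk (n h : ℕ) (g : ℕ → ℕ) : Prop extends IsWalk n g where
  start : g 0 = 1
  finish : g n = 2 * h - 1

def toOpen (n h : ℕ) (f : ℕ → ℕ) : ℕ → ℕ :=
  reflectPrefix (lastHit f 1 n) (· + (h - 1)) f

def toClosed (n h : ℕ) (g : ℕ → ℕ) : ℕ → ℕ :=
  reflectPrefix (lastHit g h n) (· - (h - 1)) g

variable {h : ℕ}

theorem toOpen_congr (hfg : EqOn f g (Iic n)) : EqOn (toOpen n h f) (toOpen n h g) (Iic n) := by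
  unfold toOpen
  rw [lastHit_congr hfg]
  exact reflectPrefix_congr hfg lastHit_le

theorem toClosed_congr (hfg : EqOn f g (Iic n)) :
    EqOn (toClosed n h f) (toClosed n h g) (Iic n) := by
  unfold toClosed
  rw [lastHit_congr hfg]
  exact reflectPrefix_congr hfg lastHit_le

namespace IsClosedWalk

theorem two_le_of_lastHit_lt (hf : IsClosedWalk n h f) {s : ℕ}
    (hs : lastHit f 1 n < s) (hsn : s ≤ n) : 2 ≤ f s := by
  have := hf.pos s hsn
  have := apply_ne_of_lastHit_lt hs hsn
  omega

theorem isOpenWalk_toOpen (hf : IsClosedWalk n h f) : IsOpenWalk n h (toOpen n h f) := by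
  rw [toOpen]
  set m := lastHit f 1 n
  have hmn : m ≤ n := lastHit_le
  have hfm : f m = 1 := apply_lastHit hf.hits_one
  have h0 := hf.start
  have hn := hf.finish
  have := hf.pos 0 (Nat.zero_le n)
  refine ⟨⟨fun s hsn => ?_, ?_⟩, ?_, ?_⟩
  · rcases le_or_gt s m with hsm | hms
    · rw [reflectPrefix_of_le hsm]
      exact hf.pos _ (by omega)
    · rw [reflectPrefix_of_lt hms]
      exact Nat.le_add_right_of_le (hf.pos s hsn)
  · refine reflectPrefix_natAbs_sub_eq_one (h - 1 : ℕ) hmn hf.step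
      (fun _ _ _ => by push_cast; rfl) fun hm => ?_
    have := hf.step m hm
    have := hf.two_le_of_lastHit_lt (s := m + 1) (Nat.lt_succ_self m) hm
    omega
  · rw [reflectPrefix_of_le (Nat.zero_le m), Nat.sub_zero, hfm]
  · rcases hmn.lt_or_eq with hmn | hmn
    · rw [reflectPrefix_of_lt hmn]
      omega
    · rw [reflectPrefix_of_le hmn.ge, hmn, Nat.sub_self]
      rw [hmn] at hfm
      omega

theorem lastHit_toOpen (hf : IsClosedWalk n h f) : lastHit (toOpen n h f) h n = lastHit f 1 n := by
  refine lastHit_eq lastHit_le ?_ fun s hs hsn => ?_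
  · rw [toOpen, reflectPrefix_of_le le_rfl, Nat.sub_self, hf.start]
  · have := hf.two_le_of_lastHit_lt hs hsn
    have := hf.start
    have := hf.pos 0 (Nat.zero_le n)
    rw [toOpen, reflectPrefix_of_lt hs]
    omega

theorem toClosed_toOpen (hf : IsClosedWalk n h f) : toClosed n h (toOpen n h f) = f := by
  funext s
  rw [toClosed, hf.lastHit_toOpen, toOpen, reflectPrefix_reflectPrefix]
  split_ifs <;> simp

end IsClosedWalk

namespace IsOpenWalk

theorem one_le (hg : IsOpenWalk n h g) : 1 ≤ h := by
  have := hg.pos n le_rfl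
  have := hg.finish
  omega

theorem exists_eq (hg : IsOpenWalk n h g) : ∃ t ≤ n, g t = h := by
  have := hg.one_le
  obtain ⟨t, -, htn, hgt⟩ := exists_eq_of_natAbs_sub_eq_one (v := h) (Nat.zero_le n)
    (fun t _ ht => hg.step t ht) (by rw [hg.start]; omega) (by rw [hg.finish]; omega)
  exact ⟨t, htn, hgt⟩

theorem lt_of_lastHit_lt (hg : IsOpenWalk n h g) {s : ℕ}
    (hs : lastHit g h n < s) (hsn : s ≤ n) : h < g s := by
  by_contra! hle
  obtain ⟨t, hst, htn, hgt⟩ := exists_eq_of_natAbs_sub_eq_one hsn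
    (fun t _ ht => hg.step t ht) hle (by rw [hg.finish]; omega)
  exact apply_ne_of_lastHit_lt (by omega) htn hgt

theorem isClosedWalk_toClosed (hg : IsOpenWalk n h g) : IsClosedWalk n h (toClosed n h g) := by
  rw [toClosed]
  set m := lastHit g h n
  have hmn : m ≤ n := lastHit_le
  have hgm : g m = h := apply_lastHit hg.exists_eq
  have h0 := hg.start
  have hn := hg.finish
  have := hg.one_le
  refine ⟨⟨fun s hsn => ?_, ?_⟩, ⟨m, hmn, ?_⟩, ?_, ?_⟩
  · rcases le_or_gt s m with hsm | hms
    · rw [reflectPrefix_of_le hsm]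
      exact hg.pos _ (by omega)
    · rw [reflectPrefix_of_lt hms]
      have := hg.lt_of_lastHit_lt hms hsn
      omega
  · refine reflectPrefix_natAbs_sub_eq_one (-(h - 1 : ℕ)) hmn hg.step
      (fun t ht htn => ?_) fun hm => ?_
    · have := hg.lt_of_lastHit_lt ht htn
      push_cast [show h - 1 ≤ g t by omega]
      ring
    · have := hg.step m hm
      have := hg.lt_of_lastHit_lt (s := m + 1) (Nat.lt_succ_self m) hm
      omega
  · rw [reflectPrefix_of_le le_rfl, Nat.sub_self, h0]
  · rw [reflectPrefix_of_le (Nat.zero_le m), Nat.sub_zero, hgm]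
  · rcases hmn.lt_or_eq with hmn | hmn
    · rw [reflectPrefix_of_lt hmn]
      omega
    · rw [reflectPrefix_of_le hmn.ge, hmn, Nat.sub_self]
      rw [hmn] at hgm
      omega

theorem lastHit_toClosed (hg : IsOpenWalk n h g) :
    lastHit (toClosed n h g) 1 n = lastHit g h n := by
  refine lastHit_eq lastHit_le ?_ fun s hs hsn => ?_
  · rw [toClosed, reflectPrefix_of_le le_rfl, Nat.sub_self, hg.start]
  · have := hg.lt_of_lastHit_lt hs hsn
    have := hg.one_le
    rw [toClosed, reflectPrefix_of_lt hs]
    omega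

theorem toOpen_toClosed (hg : IsOpenWalk n h g) : EqOn (toOpen n h (toClosed n h g)) g (Iic n) := by
  intro s (hs : s ≤ n)
  rw [toOpen, hg.lastHit_toClosed, toClosed, reflectPrefix_reflectPrefix]
  split_ifs with hsm
  · rfl
  · have := hg.lt_of_lastHit_lt (not_le.1 hsm) hs
    omega

end IsOpenWalk

-- `D_n^h` and `C_n^h`.
abbrev ClosedPaths (n h : ℕ) : Type :=
  {i : ZMod n → ℕ // (∀ j, 1 ≤ i j) ∧ (∀ j, ((i j : ℤ) - i (j + 1)).natAbs = 1) ∧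
    (∃ j, i j = 1) ∧ i 0 = h}

abbrev OpenPaths (n h : ℕ) : Type :=
  {i : Fin (n + 1) → ℕ // (∀ j, 1 ≤ i j) ∧
    (∀ j : Fin n, ((i j.castSucc : ℤ) - i j.succ).natAbs = 1) ∧ i 0 = 1 ∧
    i (Fin.last n) = 2 * h - 1}

section Cyclic

variable [NeZero n]

theorem isClosedWalk_of_closedPaths (d : ClosedPaths n h) : IsClosedWalk n h (fun t => d.1 t) where
  pos _ _ := d.2.1 _
  step t _ := by simpa using d.2.2.1 t
  hits_one := by
    obtain ⟨j, hj⟩ := d.2.2.2.1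
    exact ⟨j.val, (ZMod.val_lt j).le, by rwa [ZMod.natCast_zmod_val]⟩
  start := by simpa using d.2.2.2.2
  finish := by simpa using d.2.2.2.2

theorem IsClosedWalk.apply_val_natCast (hf : IsClosedWalk n h f) {t : ℕ} (ht : t ≤ n) :
    f (t : ZMod n).val = f t := by
  rw [ZMod.val_natCast]
  rcases ht.lt_or_eq with ht | rfl
  · rw [Nat.mod_eq_of_lt ht]
  · rw [Nat.mod_self, hf.start, hf.finish]

def IsClosedWalk.toClosedPaths (hf : IsClosedWalk n h f) : ClosedPaths n h :=
  ⟨fun j => f j.val, fun j => hf.pos _ (ZMod.val_lt j).le,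
    fun j => by
      have hj := ZMod.val_lt j
      dsimp only
      rw [show j + 1 = ((j.val + 1 : ℕ) : ZMod n) by simp, hf.apply_val_natCast hj]
      exact hf.step _ hj,
    by
      obtain ⟨t, htn, hft⟩ := hf.hits_one
      exact ⟨t, (hf.apply_val_natCast htn).trans hft⟩,
    by simpa using hf.start⟩

end Cyclic

theorem _root_.Fin.clamp_of_le {t : ℕ} (ht : t ≤ n) :
    Fin.clamp t n = ⟨t, Nat.lt_succ_of_le ht⟩ :=
  Fin.ext (min_eq_left ht)

theorem isOpenWalk_of_openPaths (c : OpenPaths n h) :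
    IsOpenWalk n h (fun t => c.1 (Fin.clamp t n)) where
  pos _ _ := c.2.1 _
  step t ht := by
    rw [Fin.clamp_of_le ht.le, Fin.clamp_of_le ht]
    exact c.2.2.1 ⟨t, ht⟩
  start := by simpa [Fin.clamp] using c.2.2.2.1
  finish := by rw [Fin.clamp_eq_last n n le_rfl]; exact c.2.2.2.2

def IsOpenWalk.toOpenPaths (hg : IsOpenWalk n h g) : OpenPaths n h :=
  ⟨fun s => g s, fun s => hg.pos _ s.is_le, fun j => by simpa using hg.step j j.2,
    hg.start, by simpa using hg.finish⟩

theorem eqOn_clamp (g : ℕ → ℕ) : EqOn (fun t => g (Fin.clamp t n)) g (Iic n) :=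
  fun t (ht : t ≤ n) => congrArg g (congrArg Fin.val (Fin.clamp_of_le ht))

def closedPathsEquivOpenPaths (n h : ℕ) [NeZero n] : ClosedPaths n h ≃ OpenPaths n h where
  toFun d := (isClosedWalk_of_closedPaths d).isOpenWalk_toOpen.toOpenPaths
  invFun c := (isOpenWalk_of_openPaths c).isClosedWalk_toClosed.toClosedPaths
  left_inv d := by
    have hf := isClosedWalk_of_closedPaths d
    ext j
    have hj : j.val ∈ Iic n := mem_Iic.2 (ZMod.val_lt j).le
    calc _ = toClosed n h (toOpen n h fun t => d.1 t) j.val := toClosed_congr (eqOn_clamp _) hj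
      _ = d.1 j := by rw [hf.toClosed_toOpen]; exact congrArg d.1 (ZMod.natCast_zmod_val j)
  right_inv c := by
    have hg := isOpenWalk_of_openPaths c
    ext s
    have hs : s.val ∈ Iic n := mem_Iic.2 s.is_le
    calc _ = toOpen n h (toClosed n h fun t => c.1 (Fin.clamp t n)) s.val :=
          toOpen_congr (fun t ht => hg.isClosedWalk_toClosed.apply_val_natCast ht) hs
      _ = c.1 s := (hg.toOpen_toClosed hs).trans (congrArg c.1 (Fin.clamp_of_le s.is_le))

end PathReflection

theorem equiv_D_C_general (k h : ℕ) [NeZero (2 * k)] :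
    Nonempty (
      {i : ZMod (2 * k) → ℕ //
        (∀ j, 1 ≤ i j) ∧
        (∀ j, ((i j : ℤ) - i (j + 1)).natAbs = 1) ∧
        (∃ j, i j = 1) ∧
        i 0 = h} ≃
      {i : Fin (2 * k + 1) → ℕ //
        (∀ j, 1 ≤ i j) ∧
        (∀ j : Fin (2 * k), ((i j.castSucc : ℤ) - i j.succ).natAbs = 1) ∧
        i 0 = 1 ∧
        i (Fin.last (2 * k)) = 2 * h - 1}) :=
  ⟨PathReflection.closedPathsEquivOpenPaths (2 * k) h⟩

/-- There is a bijection between `D_{2k}^h`, the set of closed cyclic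
±1-step paths of length `2k` on the positive integers containing the value 1 and with
first entry `h`, and `C_{2k}^h`, the set of (non-cyclic) ±1-step paths
`(i_1,…,i_{2k+1})` on the positive integers with `i_1 = 1` and `i_{2k+1} = 2h-1`. -/
theorem equiv_D_C (k h : ℕ) (hk : 0 < k) (hh : 1 ≤ h) [NeZero (2 * k)] :
    Nonempty (
      {i : ZMod (2 * k) → ℕ //
        (∀ j, 1 ≤ i j) ∧
        (∀ j, ((i j : ℤ) - i (j + 1)).natAbs = 1) ∧
        (∃ j, i j = 1) ∧
        i 0 = h} ≃
      {i : Fin (2 * k + 1) → ℕ //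
        (∀ j, 1 ≤ i j) ∧
        (∀ j : Fin (2 * k), ((i j.castSucc : ℤ) - i j.succ).natAbs = 1) ∧
        i 0 = 1 ∧
        i (Fin.last (2 * k)) = 2 * h - 1}) :=
  equiv_D_C_general k h
end
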